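/- The grounded extension of a finite argumentation framework is conflict-free, hence is the least complete extension. -/
import Mathlib


def conflictFree {α : Type*} (att : α → α → Prop) (E : Set α) : Prop :=
  ∀ a ∈ E, ∀ b ∈ E, ¬ att a b

def acceptable {α : Type*} (att : α → α → Prop) (E : Set α) (a : α) : Prop :=
  ∀ b, att b a → ∃ c ∈ E, att c b

/-- The characteristic function, as a monotone map on sets of arguments. -/
def charF {α : Type*} (att : α → α → Prop) : Set α →o Set α :=
  ⟨fun E => {a | acceptable att E a}, fun _ _ h _ ha b hb =>
    let ⟨c, hc, hcb⟩ := ha b hb; ⟨c, h hc, hcb⟩⟩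

/-- The grounded extension: the least fixed point of the characteristic function. -/
def grounded {α : Type*} (att : α → α → Prop) : Set α :=
  OrderHom.lfp (charF att)

def complete {α : Type*} (att : α → α → Prop) (E : Set α) : Prop :=
  conflictFree att E ∧ charF att E = E

/-- The grounded extension of a finite argumentation framework is conflict-free,
hence is the least complete extension. -/
theorem grounded_least_complete {α : Type*} [Finite α] (att : α → α → Prop) :
    conflictFree att (grounded att) ∧ complete att (grounded att) ∧
      ∀ E : Set α, complete att E → grounded att ⊆ E := by
  have hfix : charF att (grounded att) = grounded att := OrderHom.map_lfp (charF att)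
  -- conflict-freeness via lfp induction
  set C : Set α := {a | a ∈ grounded att ∧ ∀ b ∈ grounded att, ¬ att a b ∧ ¬ att b a}
    with hC
  have hCsub : C ⊆ grounded att := fun a ha => ha.1
  have hpre : charF att C ≤ C := by
    intro a ha
    have haG : a ∈ grounded att := by
      rw [← hfix]; exact (charF att).monotone hCsub ha
    have hnoatt : ∀ b ∈ grounded att, ¬ att b a := by
      intro b hb hba
      obtain ⟨c, hc, hcb⟩ := ha b hba
      exact (hc.2 b hb).1 hcb
    refine ⟨haG, fun b hb => ⟨?_, hnoatt b hb⟩⟩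
    intro hab
    have hbF : b ∈ charF att (grounded att) := by rw [hfix]; exact hb
    obtain ⟨c, hc, hca⟩ := hbF a hab
    exact hnoatt c hc hca
  have hGC : grounded att ⊆ C := OrderHom.lfp_le (charF att) hpre
  have hcf : conflictFree att (grounded att) := fun a ha b hb =>
    ((hGC ha).2 b hb).1
  exact ⟨hcf, ⟨hcf, hfix⟩, fun E hE => OrderHom.lfp_le_fixed (charF att) hE.2⟩
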